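/- Let U and V be finite-dimensional real inner product spaces, G : U → V linear, a : V → V self-adjoint positive definite, and s : U → U self-adjoint positive semidefinite. Define B(u, w) := ⟨a (G u), G w⟩ + ⟨s u, w⟩. If ker G ∩ ker s = {0}, then for every f ∈ U there exists a unique u ∈ U such that B(u, w) = ⟨f, w⟩ for all w ∈ U. -/
import Mathlib


open RealInnerProductSpace

-- A symmetric positive semidefinite operator with ⟪s u, u⟫ = 0 kills u.
lemma psd_inner_zero {U : Type*} [NormedAddCommGroup U] [InnerProductSpace ℝ U]
    (s : U →ₗ[ℝ] U) (hs_sym : ∀ x y : U, ⟪s x, y⟫ = ⟪x, s y⟫)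
    (hs_psd : ∀ x : U, 0 ≤ ⟪s x, x⟫) (u : U) (h : ⟪s u, u⟫ = 0) : s u = 0 := by
  by_contra hne
  have hpos : (0:ℝ) < ‖s u‖ ^ 2 := by
    have := norm_pos_iff.mpr hne
    positivity
  set c : ℝ := ⟪s (s u), s u⟫ with hc
  have key : ∀ t : ℝ, 0 ≤ 2 * t * ‖s u‖ ^ 2 + t ^ 2 * c := by
    intro t
    have h1 := hs_psd (u + t • s u)
    have hexp : ⟪s (u + t • s u), u + t • s u⟫
        = ⟪s u, u⟫ + t * ⟪s u, s u⟫ + t * ⟪s (s u), u⟫ + t ^ 2 * c := by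
      rw [map_add, map_smul, inner_add_left, inner_add_right, inner_add_right,
        real_inner_smul_left, real_inner_smul_right, real_inner_smul_left,
        real_inner_smul_right]
      ring
    have hsym : ⟪s (s u), u⟫ = ⟪s u, s u⟫ := hs_sym (s u) u
    have hnorm : ⟪s u, s u⟫ = ‖s u‖ ^ 2 := real_inner_self_eq_norm_sq (s u)
    rw [hexp, hsym, hnorm, h] at h1
    linarith
  rcases le_or_gt c 0 with hcle | hcgt
  · have := key (-1)
    nlinarith
  · have ht := key (-(‖s u‖ ^ 2) / c)
    have heq : 2 * (-(‖s u‖ ^ 2) / c) * ‖s u‖ ^ 2 + (-(‖s u‖ ^ 2) / c) ^ 2 * c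
        = -((‖s u‖ ^ 2) ^ 2 / c) := by
      field_simp
      ring
    rw [heq] at ht
    have : 0 < (‖s u‖ ^ 2) ^ 2 / c := div_pos (by positivity) hcgt
    linarith

theorem condensed_system_wellposed
    {U V : Type*} [NormedAddCommGroup U] [InnerProductSpace ℝ U] [FiniteDimensional ℝ U]
    [NormedAddCommGroup V] [InnerProductSpace ℝ V] [FiniteDimensional ℝ V]
    (G : U →ₗ[ℝ] V) (a : V →ₗ[ℝ] V) (s : U →ₗ[ℝ] U)
    (ha_sym : ∀ x y : V, ⟪a x, y⟫ = ⟪x, a y⟫)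
    (ha_pos : ∀ x : V, x ≠ 0 → 0 < ⟪a x, x⟫)
    (hs_sym : ∀ x y : U, ⟪s x, y⟫ = ⟪x, s y⟫)
    (hs_psd : ∀ x : U, 0 ≤ ⟪s x, x⟫)
    (hker : LinearMap.ker G ⊓ LinearMap.ker s = ⊥) :
    ∀ f : U, ∃! u : U, ∀ w : U, ⟪a (G u), G w⟫ + ⟪s u, w⟫ = ⟪f, w⟫ := by
  intro f
  set T : U →ₗ[ℝ] U := LinearMap.adjoint G ∘ₗ a ∘ₗ G + s with hT
  have hTinner : ∀ u w : U, ⟪T u, w⟫ = ⟪a (G u), G w⟫ + ⟪s u, w⟫ := by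
    intro u w
    simp [hT, LinearMap.add_apply, inner_add_left, LinearMap.adjoint_inner_left]
  have ha_psd : ∀ x : V, 0 ≤ ⟪a x, x⟫ := by
    intro x
    by_cases hx : x = 0
    · simp [hx]
    · exact le_of_lt (ha_pos x hx)
  have hTinj : Function.Injective T := by
    rw [← LinearMap.ker_eq_bot, LinearMap.ker_eq_bot']
    intro u hu
    have h0 : ⟪a (G u), G u⟫ + ⟪s u, u⟫ = 0 := by
      rw [← hTinner, hu, inner_zero_left]
    have hG0 : ⟪a (G u), G u⟫ = 0 := le_antisymm (by nlinarith [hs_psd u]) (ha_psd (G u))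
    have hs0 : ⟪s u, u⟫ = 0 := by linarith
    have hGu : G u = 0 := by
      by_contra hne
      exact absurd hG0 (ne_of_gt (ha_pos (G u) hne))
    have hsu : s u = 0 := psd_inner_zero s hs_sym hs_psd u hs0
    have : u ∈ LinearMap.ker G ⊓ LinearMap.ker s := ⟨hGu, hsu⟩
    rw [hker] at this
    exact this
  have hTsurj : Function.Surjective T :=
    (LinearMap.injective_iff_surjective).mp hTinj
  obtain ⟨u, hu⟩ := hTsurj f
  refine ⟨u, ?_, ?_⟩
  · intro w
    rw [← hTinner, hu]
  · intro y hy
    apply hTinj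
    rw [hu]
    apply ext_inner_right ℝ
    intro w
    rw [hTinner]
    exact hy w
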